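/- Let q be a real number with q > 0 and q ≠ 1, let r ≥ 1 and n ≥ 0 be integers, and let S(n,0), S(n,1), …, S(n,n) be real numbers such that [x]^n = Σ_{k=0}^{n} q^{k(k−1)/2} · S(n,k) · [x]_k for every real x (this identity determines the S(n,k) uniquely; they are the Carlitz q-Stirling numbers of the second kind). Then β_n^{(r)} = Σ_{k=0}^{n} φ_r(q,k) · S(n,k), where φ_r(q,k) := (−1)^k · [k]! · Σ_{i=0}^{r−1} q^{i·k} · [r−1]_i / [k+r]_{i+1}. -/

import Mathlib

/-! Put `t = q ^ x`. Then `[x] ^ n = ((t - 1)/(q - 1)) ^ n` and `q ^ (k(k-1)/2) [x]_k` is the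
polynomial `P_k(t) = ∏_{j<k} (t - q ^ j)/(q - 1)`, so the hypothesis, holding for every `t > 0`, is an
identity of polynomials. Apply the linear functional `Φ_r : t ^ m ↦ (m + r)/[m + r]`. The left side
becomes `β_n^{(r)}`. Since `Φ_r (t p) = Φ_{r+1} p`, the recursion `P_{k+1} = P_k (t - q ^ k)/(q - 1)` turns
into `(q - 1) Φ_r(P_{k+1}) = Φ_{r+1}(P_k) - q ^ k Φ_r(P_k)`, with `Φ_r(P_0) = r/[r]`.
The explicit `φ_r(q, k)` has the same value at `k = 0` and, for `r ≥ 1`, the same recursion in `k`,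
which follows by induction on `r` from its evident recursion in `r`. -/

open Finset

/-- The q-bracket: `[x] = (q^x - 1)/(q - 1)`. -/
noncomputable def qb (q x : ℝ) : ℝ := (q ^ x - 1) / (q - 1)

/-- The q-falling factorial `[x]_m = [x]·[x-1]⋯[x-m+1]`. -/
noncomputable def qff (q x : ℝ) (m : ℕ) : ℝ := ∏ j ∈ range m, qb q (x - j)

/-- The q-factorial `[m]! = [m]_m`. -/
noncomputable def qfact (q : ℝ) (m : ℕ) : ℝ := qff q (m : ℝ) m


section Bracket

variable {q : ℝ}

lemma qb_natCast (m : ℕ) : qb q m = (q ^ m - 1) / (q - 1) := by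
  rw [qb, Real.rpow_natCast]

lemma qb_natCast_add (m n : ℕ) : qb q ((m + n : ℕ) : ℝ) = qb q m + q ^ m * qb q n := by
  simp only [qb_natCast]
  ring

lemma sub_one_mul_qb_natCast (hq1 : q ≠ 1) (m : ℕ) : (q - 1) * qb q m = q ^ m - 1 := by
  rw [qb_natCast, mul_div_cancel₀ _ (sub_ne_zero.2 hq1)]

lemma qb_ne_zero (hq : 0 < q) (hq1 : q ≠ 1) {x : ℝ} (hx : x ≠ 0) : qb q x ≠ 0 := by
  refine div_ne_zero (sub_ne_zero.2 ?_) (sub_ne_zero.2 hq1)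
  rwa [← Real.rpow_zero q, Ne, Real.rpow_right_inj hq hq1]

lemma qff_succ (x : ℝ) (m : ℕ) : qff q x (m + 1) = qb q x * qff q (x - 1) m := by
  rw [qff, prod_range_succ', qff, mul_comm]
  congr 1
  · simp
  · exact prod_congr rfl fun j _ => congrArg _ (by push_cast; ring)

lemma qfact_succ (k : ℕ) : qfact q (k + 1) = qb q (k + 1 : ℕ) * qfact q k := by
  rw [qfact, qff_succ, qfact]
  push_cast
  ring_nf

end Bracket

noncomputable def phiSum (q : ℝ) (r k : ℕ) : ℝ :=
  ∑ i ∈ range r, q ^ (i * k) * qff q ((r : ℝ) - 1) i / qff q ((k : ℝ) + r) (i + 1)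

noncomputable def phi (q : ℝ) (r k : ℕ) : ℝ := (-1) ^ k * qfact q k * phiSum q r k

section Phi

variable {q : ℝ}

@[simp]
lemma phiSum_zero_left (k : ℕ) : phiSum q 0 k = 0 := by
  simp [phiSum]

lemma phiSum_succ_left (r k : ℕ) :
    phiSum q (r + 1) k = (q ^ k * qb q r * phiSum q r k + 1) / qb q (k + r + 1 : ℕ) := by
  have hr_cast : ((r + 1 : ℕ) : ℝ) - 1 = r := by push_cast; ring
  have hkr_cast : (k : ℝ) + (r + 1 : ℕ) = (k + r + 1 : ℕ) := by push_cast; ring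
  have hkr_sub : ((k + r + 1 : ℕ) : ℝ) - 1 = k + r := by push_cast; ring
  rw [phiSum, sum_range_succ', phiSum, add_div, mul_sum, sum_div, hr_cast, hkr_cast]
  congr 1
  · refine sum_congr rfl fun i _ => ?_
    rw [qff_succ, qff_succ _ (i + 1), hkr_sub]
    ring
  · simp [qff]

variable (hq : 0 < q) (hq1 : q ≠ 1)
include hq hq1

lemma phiSum_zero_right (r : ℕ) : phiSum q r 0 = r / qb q r := by
  induction r with
  | zero => simp
  | succ r ih =>
    rw [phiSum_succ_left, ih, pow_zero, one_mul, zero_add]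
    rcases eq_or_ne r 0 with rfl | hr
    · simp
    · rw [mul_div_cancel₀ _ (qb_ne_zero hq hq1 (Nat.cast_ne_zero.2 hr))]
      push_cast
      rfl

lemma phiSum_succ_right {r : ℕ} (hr : 1 ≤ r) (k : ℕ) :
    q ^ k * phiSum q r k - phiSum q (r + 1) k = (q ^ (k + 1) - 1) * phiSum q r (k + 1) := by
  have hqb {m : ℕ} (hm : m ≠ 0) : qb q m ≠ 0 := qb_ne_zero hq hq1 (Nat.cast_ne_zero.2 hm)
  induction r, hr using Nat.le_induction with
  | base =>
    have h1 : qb q (k + 1 : ℕ) ≠ 0 := hqb (by omega)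
    have h2 : qb q (k + 1 + 1 : ℕ) ≠ 0 := hqb (by omega)
    have h3 := qb_natCast_add (q := q) 1 (k + 1)
    rw [show 1 + (k + 1) = k + 1 + 1 by ring] at h3
    simp only [phiSum_succ_left, phiSum_zero_left, mul_zero, zero_add, add_zero]
    field_simp
    linear_combination q ^ k * h3
  | succ r hr ih =>
    have hb := phiSum_succ_left (q := q) r k
    have hb' := phiSum_succ_left (q := q) (r + 1) k
    have hc' := phiSum_succ_left (q := q) r (k + 1)
    rw [eq_div_iff (hqb (by omega))] at hb hb' hc'
    -- the step is a linear consequence of the three recursions, the induction hypothesis and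
    -- the splittings `[k + r + 2] = [r + 1] + q^(r+1) [k + 1]`, `[k + r + 1] = [r] + q^r [k + 1]`
    have h1 := qb_natCast_add (q := q) (r + 1) (k + 1)
    have h2 := qb_natCast_add (q := q) r (k + 1)
    rw [show r + 1 + (k + 1) = k + (r + 1) + 1 by ring] at h1
    rw [show r + (k + 1) = k + r + 1 by ring] at h2
    rw [show k + 1 + r + 1 = k + (r + 1) + 1 by ring] at hc'
    apply mul_left_cancel₀ (hqb (show k + (r + 1) + 1 ≠ 0 by omega))
    linear_combination (-1) * hb' - (q ^ (k + 1) - 1) * hc' + q ^ (k + 1) * qb q r * ih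
      + q ^ k * phiSum q (r + 1) k * h1 - q ^ (k + 1) * phiSum q (r + 1) k * h2 + q ^ (k + 1) * hb

lemma sub_one_mul_phi_succ_right {r : ℕ} (hr : 1 ≤ r) (k : ℕ) :
    (q - 1) * phi q r (k + 1) = phi q (r + 1) k - q ^ k * phi q r k := by
  simp only [phi, qfact_succ]
  linear_combination (-1) ^ k * qfact q k * phiSum_succ_right hq hq1 hr k
    - (-1) ^ k * qfact q k * phiSum q r (k + 1) * sub_one_mul_qb_natCast hq1 (k + 1)

end Phi

open Polynomial

noncomputable def momentFunctional (q : ℝ) (r : ℕ) : ℝ[X] →ₗ[ℝ] ℝ :=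
  lsum fun m => (((m : ℝ) + r) / qb q ((m : ℝ) + r)) • LinearMap.id

noncomputable def qFallingPoly (q : ℝ) (k : ℕ) : ℝ[X] :=
  ∏ j ∈ range k, (q - 1)⁻¹ • (X - C (q ^ j))

section Moment

variable {q : ℝ}

lemma momentFunctional_monomial (r m : ℕ) (a : ℝ) :
    momentFunctional q r (monomial m a) = a * (((m : ℝ) + r) / qb q ((m : ℝ) + r)) := by
  simp [momentFunctional, mul_comm]

lemma momentFunctional_X_mul (r : ℕ) (p : ℝ[X]) :
    momentFunctional q r (X * p) = momentFunctional q (r + 1) p := by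
  induction p using Polynomial.induction_on' with
  | add p p' hp hp' => rw [mul_add, map_add, map_add, hp, hp']
  | monomial m a =>
    rw [X_mul_monomial, momentFunctional_monomial, momentFunctional_monomial]
    push_cast
    ring_nf

lemma momentFunctional_X_sub_one_pow (r n : ℕ) :
    momentFunctional q r ((X - 1) ^ n) = ∑ k ∈ range (n + 1),
      (-1 : ℝ) ^ (n - k) * (n.choose k : ℝ) * (((k : ℝ) + r) / qb q ((k : ℝ) + r)) := by
  have hX : (X - 1 : ℝ[X]) = X + C (-1) := by rw [map_neg, map_one, sub_eq_add_neg]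
  have hdeg : ((X + C (-1 : ℝ)) ^ n).natDegree < n + 1 := by
    rw [(monic_X_add_C _).natDegree_pow, natDegree_X_add_C]
    omega
  rw [hX, as_sum_range' _ _ hdeg, map_sum]
  simp only [momentFunctional_monomial, coeff_X_add_C_pow]

lemma qFallingPoly_succ (k : ℕ) :
    qFallingPoly q (k + 1) = (q - 1)⁻¹ • (X * qFallingPoly q k - q ^ k • qFallingPoly q k) := by
  rw [qFallingPoly, prod_range_succ, ← qFallingPoly]
  simp only [smul_eq_C_mul]
  ring

lemma eval_qFallingPoly (hq : 0 < q) (k : ℕ) (x : ℝ) :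
    (qFallingPoly q k).eval (q ^ x) = q ^ (k * (k - 1) / 2) * qff q x k := by
  rw [qFallingPoly, eval_prod, qff, ← sum_range_id, ← prod_pow_eq_pow_sum, ← prod_mul_distrib]
  refine prod_congr rfl fun j _ => ?_
  rw [eval_smul, eval_sub, eval_X, eval_C, qb, Real.rpow_sub hq, Real.rpow_natCast, smul_eq_mul]
  field_simp

lemma momentFunctional_qFallingPoly (hq : 0 < q) (hq1 : q ≠ 1) {r : ℕ} (hr : 1 ≤ r) (k : ℕ) :
    momentFunctional q r (qFallingPoly q k) = phi q r k := by
  induction k generalizing r with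
  | zero =>
    rw [qFallingPoly, prod_range_zero, ← monomial_zero_one, momentFunctional_monomial, phi,
      phiSum_zero_right hq hq1]
    simp [qfact, qff]
  | succ k ih =>
    rw [qFallingPoly_succ, map_smul, map_sub, map_smul, momentFunctional_X_mul, ih (by omega),
      ih hr, smul_eq_mul, smul_eq_mul, ← sub_one_mul_phi_succ_right hq hq1 hr,
      inv_mul_cancel_left₀ (sub_ne_zero.2 hq1)]

lemma smul_X_sub_one_pow_eq_sum_qFallingPoly (hq : 0 < q) (hq1 : q ≠ 1) {n : ℕ} {S : ℕ → ℝ}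
    (hS : ∀ x : ℝ,
      qb q x ^ n = ∑ k ∈ range (n + 1), q ^ (k * (k - 1) / 2) * S k * qff q x k) :
    ((q - 1) ^ n)⁻¹ • (X - 1) ^ n = ∑ k ∈ range (n + 1), S k • qFallingPoly q k := by
  apply eq_of_infinite_eval_eq
  refine (Set.Ioi_infinite 0).mono fun t ht => ?_
  obtain ⟨x, rfl⟩ : ∃ x, q ^ x = t := ⟨Real.logb q t, Real.rpow_logb hq hq1 ht⟩
  have hqb : qb q x ^ n = ((q - 1) ^ n)⁻¹ * (q ^ x - 1) ^ n := by
    rw [qb, div_pow, div_eq_inv_mul]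
  simp only [Set.mem_ofPred_eq, eval_smul, eval_pow, eval_sub, eval_X, eval_one, eval_finsetSum,
    eval_qFallingPoly hq, smul_eq_mul, ← hqb, hS x]
  exact sum_congr rfl fun k _ => by ring

end Moment

theorem extended_beta_in_terms_of_q_stirling (q : ℝ) (hq : 0 < q) (hq1 : q ≠ 1)
    (r n : ℕ) (hr : 1 ≤ r) (S : ℕ → ℝ)
    (hS : ∀ x : ℝ,
      (qb q x) ^ n = ∑ k ∈ range (n + 1), q ^ (k * (k - 1) / 2) * S k * qff q x k) :
    ((q - 1) ^ n)⁻¹ *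
        ∑ k ∈ range (n + 1),
          (-1 : ℝ) ^ (n - k) * (n.choose k : ℝ) * (((k : ℝ) + r) / qb q ((k : ℝ) + r))
      = ∑ k ∈ range (n + 1),
          ((-1 : ℝ) ^ k * qfact q k *
            ∑ i ∈ range r,
              q ^ (i * k) * qff q ((r : ℝ) - 1) i / qff q ((k : ℝ) + r) (i + 1)) * S k := by
  calc _ = momentFunctional q r (((q - 1) ^ n)⁻¹ • (X - 1) ^ n) := by
        rw [map_smul, momentFunctional_X_sub_one_pow, smul_eq_mul]
    _ = ∑ k ∈ range (n + 1), phi q r k * S k := by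
        rw [smul_X_sub_one_pow_eq_sum_qFallingPoly hq hq1 hS, map_sum]
        refine sum_congr rfl fun k _ => ?_
        rw [map_smul, momentFunctional_qFallingPoly hq hq1 hr k, smul_eq_mul, mul_comm]
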